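/- Fix real numbers s, l, and h, and let p₀ ∈ ℝ satisfy B(p₀) > 0 and (h + (1−2s) − A(p₀))² < B(p₀) (note B(p₀) > 0 forces p₀ ∉ {0, l, 4, 2+l}, so in particular p₀ ≠ 0). Then the function p ↦ arccos((h + (1−2s) − A(p))/√(B(p))) is differentiable at p₀ with derivative R_I(p₀)/(p₀·√(P(p₀))). (Equivalently, p·(d/dp) arccos((h + (1−2s) − A(p))/√(B(p))) = R_I(p)/√(P(p)), which is the integration-by-parts kernel expressing the action integral as an elliptic integral.) -/

import Mathlib

lemma kernel_helper {n Np E b RIv p r q : ℝ} (hq : q ^ 2 = b) (hq0 : q ≠ 0) (hr0 : r ≠ 0)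
    (hp : p ≠ 0) (hb : b ≠ 0)
    (hcore : RIv * b = -(Np * b - n * (E / 2)) * p) :
    RIv / (p * r) = -(1 / (r / q)) * ((Np * q - n * (E / (2 * q))) / q ^ 2) := by
  subst hq
  field_simp at hcore ⊢
  ring_nf
  ring_nf at hcore
  linear_combination hcore


/-- `A_s^l(p) = l + 1 − p − 2s − l·s + (3/2)·s·p`. -/
noncomputable def redA (s l p : ℝ) : ℝ := l + 1 - p - 2 * s - l * s + 3 / 2 * s * p

/-- `B_s^l(p) = s²(1−s)²·p·(p−l)·(p−4)·(p−2−l)`. -/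
noncomputable def redB (s l p : ℝ) : ℝ :=
  s ^ 2 * (1 - s) ^ 2 * p * (p - l) * (p - 4) * (p - 2 - l)

/-- `P_{l,h}^s(p) = B_s^l(p) − (h + (1−2s) − A_s^l(p))²`. -/
noncomputable def redP (s l h p : ℝ) : ℝ := redB s l p - (h + (1 - 2 * s) - redA s l p) ^ 2

/-- `h₀ = l(1−s)`. -/
noncomputable def hZero (s l : ℝ) : ℝ := l * (1 - s)

/-- `h_l = s·l/2`. -/
noncomputable def hL (s l : ℝ) : ℝ := s * l / 2

/-- `h₄ = 6(s−2/3) + l(1−s)`. -/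
noncomputable def hFour (s l : ℝ) : ℝ := 6 * (s - 2 / 3) + l * (1 - s)

/-- `h_{2+l} = 3(s−2/3) + s·l/2`. -/
noncomputable def hTwoL (s l : ℝ) : ℝ := 3 * (s - 2 / 3) + s * l / 2

/-- The kernel `R_I(p)` of the elliptic integral expressing the action integral. -/
noncomputable def RI (s l h p : ℝ) : ℝ :=
  (hZero s l + hL s l - hFour s l - hTwoL s l) / 6 * p +
    (4 * h - hZero s l - hL s l - hFour s l - hTwoL s l) / 2 +
    l / 2 * (h - hL s l) / (p - l) + 2 * (h - hFour s l) / (p - 4) +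
    (2 + l) / 2 * (h - hTwoL s l) / (p - 2 - l)

/-- Integration-by-parts kernel for the action integral: if `B(p₀) > 0` and
`(h + (1−2s) − A(p₀))² < B(p₀)`, then `p ↦ arccos((h + (1−2s) − A(p))/√(B(p)))` has
derivative `R_I(p₀)/(p₀·√(P(p₀)))` at `p₀`. -/
theorem action_integrand_kernel (s l h p₀ : ℝ) (hB : 0 < redB s l p₀)
    (hh : (h + (1 - 2 * s) - redA s l p₀) ^ 2 < redB s l p₀) :
    HasDerivAt
      (fun p : ℝ => Real.arccos ((h + (1 - 2 * s) - redA s l p) / Real.sqrt (redB s l p)))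
      (RI s l h p₀ / (p₀ * Real.sqrt (redP s l h p₀))) p₀ := by
  have hBfac : redB s l p₀ = s ^ 2 * (1 - s) ^ 2 * p₀ * (p₀ - l) * (p₀ - 4) * (p₀ - 2 - l) := rfl
  have hbne : redB s l p₀ ≠ 0 := ne_of_gt hB
  have hp0 : p₀ ≠ 0 := by intro hc; rw [hBfac, hc] at hB; simp at hB
  have hpl : p₀ - l ≠ 0 := by intro hc; rw [hBfac, hc] at hB; simp at hB
  have hp4 : p₀ - 4 ≠ 0 := by intro hc; rw [hBfac, hc] at hB; simp at hB
  have hp2l : p₀ - 2 - l ≠ 0 := by intro hc; rw [hBfac, hc] at hB; simp at hB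
  have hPdef : redP s l h p₀ = redB s l p₀ - (h + (1 - 2 * s) - redA s l p₀) ^ 2 := rfl
  have hPpos : 0 < redP s l h p₀ := by rw [hPdef]; linarith
  have hsbpos : 0 < Real.sqrt (redB s l p₀) := Real.sqrt_pos.mpr hB
  have hsbne : Real.sqrt (redB s l p₀) ≠ 0 := ne_of_gt hsbpos
  have hsPne : Real.sqrt (redP s l h p₀) ≠ 0 := ne_of_gt (Real.sqrt_pos.mpr hPpos)
  have hq2 : Real.sqrt (redB s l p₀) ^ 2 = redB s l p₀ := Real.sq_sqrt hB.le
  -- derivative of the numerator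
  have hNd : HasDerivAt (fun p : ℝ => h + (1 - 2 * s) - redA s l p) (1 - 3 / 2 * s) p₀ := by
    have heq : (fun p : ℝ => h + (1 - 2 * s) - redA s l p)
        = fun p : ℝ => (h - l * (1 - s)) + (1 - 3 / 2 * s) * p := by
      funext p; simp only [redA]; ring
    rw [heq]
    simpa using ((hasDerivAt_id p₀).const_mul (1 - 3 / 2 * s)).const_add (h - l * (1 - s))
  -- derivative of B
  have d1 : HasDerivAt (fun p : ℝ => p) 1 p₀ := hasDerivAt_id p₀
  have d2 : HasDerivAt (fun p : ℝ => p - l) 1 p₀ := d1.sub_const l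
  have d3 : HasDerivAt (fun p : ℝ => p - 4) 1 p₀ := d1.sub_const 4
  have d4 : HasDerivAt (fun p : ℝ => p - 2 - l) 1 p₀ := (d1.sub_const 2).sub_const l
  have hBd : HasDerivAt (fun p : ℝ => redB s l p)
      (s ^ 2 * (1 - s) ^ 2 * ((p₀ - l) * (p₀ - 4) * (p₀ - 2 - l)
        + p₀ * (p₀ - 4) * (p₀ - 2 - l) + p₀ * (p₀ - l) * (p₀ - 2 - l)
        + p₀ * (p₀ - l) * (p₀ - 4))) p₀ := by
    have heq : (fun p : ℝ => redB s l p)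
        = fun p : ℝ => s ^ 2 * (1 - s) ^ 2 * (p * (p - l) * (p - 4) * (p - 2 - l)) := by
      funext p; simp only [redB]; ring
    rw [heq]
    have h2 := (((d1.mul d2).mul d3).mul d4).const_mul (s ^ 2 * (1 - s) ^ 2)
    refine h2.congr_deriv ?_
    simp only [Pi.mul_apply]; ring
  -- derivative of sqrt B
  have hsq := hBd.sqrt hbne
  -- derivative of the quotient
  have hdiv := hNd.div hsq hsbne
  -- x stays strictly inside (-1, 1)
  have hx2 : ((h + (1 - 2 * s) - redA s l p₀) / Real.sqrt (redB s l p₀)) ^ 2 < 1 := by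
    rw [div_pow, hq2, div_lt_one hB]
    exact hh
  have hx1 : (h + (1 - 2 * s) - redA s l p₀) / Real.sqrt (redB s l p₀) ≠ -1 := by
    intro hc; rw [hc] at hx2; norm_num at hx2
  have hx1' : (h + (1 - 2 * s) - redA s l p₀) / Real.sqrt (redB s l p₀) ≠ 1 := by
    intro hc; rw [hc] at hx2; norm_num at hx2
  have harc := (Real.hasDerivAt_arccos hx1 hx1').comp p₀ hdiv
  have h1x : 1 - ((h + (1 - 2 * s) - redA s l p₀) / Real.sqrt (redB s l p₀)) ^ 2
      = redP s l h p₀ / redB s l p₀ := by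
    rw [div_pow, hq2, hPdef]
    field_simp
  refine harc.congr_deriv (Eq.symm ?_)
  rw [h1x, Real.sqrt_div hPpos.le]
  have hcore : RI s l h p₀ * redB s l p₀
      = -((1 - 3 / 2 * s) * redB s l p₀ - (h + (1 - 2 * s) - redA s l p₀)
          * (s ^ 2 * (1 - s) ^ 2 * ((p₀ - l) * (p₀ - 4) * (p₀ - 2 - l)
            + p₀ * (p₀ - 4) * (p₀ - 2 - l) + p₀ * (p₀ - l) * (p₀ - 2 - l)
            + p₀ * (p₀ - l) * (p₀ - 4)) / 2)) * p₀ := by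
    simp only [RI, hZero, hL, hFour, hTwoL, redB, redA]
    field_simp
    ring
  exact kernel_helper hq2 hsbne hsPne hp0 hbne hcore
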